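/- arXiv:math/0202299 — 2 statements merged into one kernel-verified Lean document; each statement's English description precedes it below -/
import Mathlib

section
/- For every real α > 0 and every complex z with Re(z) > 0, the Laplace transform identity ∫₀^∞ exp(−z·u)·(1/√(2π·u))·exp(−α²/(2u)) du = exp(−α·√(2z))/√(2z) holds, where √ denotes the principal branch of the square root. -/
/-!
For real `z = x > 0` the substitution `u = t ^ 2` turns the integral into Glaisher's integral
`∫₀^∞ exp (-(a t² + b / t²)) dt = √(π / a) / 2 · exp (-2 √(a b))`, which the Cauchy–Schlömilch
substitution `s = t - c / t` reduces to the Gaussian integral. Both sides of the identity are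
holomorphic on the half-plane `0 < re z` (the left side being a complex moment generating
function), so the identity theorem extends the real case to that half-plane.
-/

open MeasureTheory Real Set Filter Topology ProbabilityTheory
open scoped Complex

section ChangeOfVariables

variable {E : Type*} [NormedAddCommGroup E] [NormedSpace ℝ E]

theorem integral_Ioi_comp_sq (g : ℝ → E) :
    ∫ t in Ioi 0, (2 * t) • g (t ^ 2) = ∫ u in Ioi 0, g u := by
  simpa [rpow_two, show (2 : ℝ) - 1 = 1 by norm_num] using
    integral_comp_rpow_Ioi_of_pos (g := g) two_pos

theorem integrableOn_Ioi_comp_sq_iff (g : ℝ → E) :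
    IntegrableOn (fun t => (2 * t) • g (t ^ 2)) (Ioi 0) ↔ IntegrableOn g (Ioi 0) := by
  simpa [rpow_two, show (2 : ℝ) - 1 = 1 by norm_num] using
    integrableOn_Ioi_comp_rpow_iff g two_ne_zero

theorem integral_Ioi_comp_div_smul (h : ℝ → E) {c : ℝ} (hc : 0 < c) :
    ∫ t in Ioi 0, (c / t ^ 2) • h (c / t) = ∫ t in Ioi 0, h t := by
  have hinv := integral_comp_rpow_Ioi (fun s => h (c * s)) (p := -1) (by norm_num)
  have hscale := integral_comp_mul_left_Ioi' h 0 hc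
  rw [mul_zero] at hscale
  rw [← hscale, ← hinv, ← integral_smul]
  refine setIntegral_congr_fun measurableSet_Ioi fun t (ht : 0 < t) => ?_
  simp only [smul_smul]
  rw [show (-1 : ℝ) - 1 = -2 by norm_num, rpow_neg ht.le, rpow_neg_one, rpow_two]
  congr 1
  simp [div_eq_mul_inv]

theorem hasDerivAt_sub_div (c : ℝ) {t : ℝ} (ht : t ≠ 0) :
    HasDerivAt (fun t : ℝ => t - c / t) (1 + c / t ^ 2) t := by
  have h := (hasDerivAt_id' t).sub ((hasDerivAt_inv ht).const_mul c)
  simp only [← div_eq_mul_inv, mul_neg, sub_neg_eq_add] at h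
  exact h

theorem strictMonoOn_sub_div {c : ℝ} (hc : 0 < c) :
    StrictMonoOn (fun t : ℝ => t - c / t) (Ioi 0) := fun x hx _ _ hxy => by
  have := div_lt_div_of_pos_left hc hx hxy
  dsimp only
  linarith

theorem image_sub_div_Ioi {c : ℝ} (hc : 0 < c) :
    (fun t : ℝ => t - c / t) '' Ioi 0 = univ := by
  refine eq_univ_of_forall fun s => ?_
  -- the positive root of `t ^ 2 - s * t - c = 0`
  set r := √(s ^ 2 + 4 * c)
  have hr : r ^ 2 = s ^ 2 + 4 * c := sq_sqrt (by positivity)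
  have hsr : |s| < r := by
    rw [← sqrt_sq_eq_abs]
    exact sqrt_lt_sqrt (sq_nonneg s) (by linarith)
  have hpos : 0 < s + r := by linarith [neg_abs_le s]
  refine ⟨(s + r) / 2, div_pos hpos two_pos, ?_⟩
  field_simp
  nlinarith

theorem integral_Ioi_one_add_div_sq_smul_comp_sub_div (g : ℝ → E) {c : ℝ} (hc : 0 < c) :
    ∫ t in Ioi 0, (1 + c / t ^ 2) • g (t - c / t) = ∫ s, g s := by
  have h := integral_image_eq_integral_abs_deriv_smul measurableSet_Ioi
    (fun t (ht : 0 < t) => (hasDerivAt_sub_div c ht.ne').hasDerivWithinAt)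
    (strictMonoOn_sub_div hc).injOn g
  rw [image_sub_div_Ioi hc, setIntegral_univ] at h
  rw [h]
  refine setIntegral_congr_fun measurableSet_Ioi fun t (ht : 0 < t) => ?_
  rw [abs_of_pos (by positivity)]

theorem integrableOn_one_add_div_sq_smul_comp_sub_div {g : ℝ → E} (hg : Integrable g) {c : ℝ}
    (hc : 0 < c) :
    IntegrableOn (fun t => (1 + c / t ^ 2) • g (t - c / t)) (Ioi 0) := by
  have h := integrableOn_image_iff_integrableOn_abs_deriv_smul measurableSet_Ioi
    (fun t (ht : 0 < t) => (hasDerivAt_sub_div c ht.ne').hasDerivWithinAt)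
    (strictMonoOn_sub_div hc).injOn g
  rw [image_sub_div_Ioi hc, integrableOn_univ] at h
  refine (h.mp hg).congr_fun (fun t (ht : 0 < t) => ?_) measurableSet_Ioi
  dsimp only
  rw [abs_of_pos (by positivity)]

end ChangeOfVariables

theorem integrableOn_exp_neg_mul_sq_add_div_sq {a : ℝ} (ha : 0 < a) {b : ℝ} (hb : 0 ≤ b) :
    IntegrableOn (fun t => rexp (-(a * t ^ 2 + b / t ^ 2))) (Ioi 0) := by
  refine (integrable_exp_neg_mul_sq ha).integrableOn.mono' (by fun_prop) ?_
  filter_upwards [ae_restrict_mem measurableSet_Ioi] with t (ht : 0 < t)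
  rw [norm_of_nonneg (exp_pos _).le, exp_le_exp]
  have : 0 ≤ b / t ^ 2 := by positivity
  linarith

theorem integral_exp_neg_sq_sub_div_sq {c : ℝ} (hc : 0 < c) :
    ∫ t in Ioi 0, rexp (-(t - c / t) ^ 2) = √π / 2 := by
  set F : ℝ → ℝ := fun t => rexp (-(t - c / t) ^ 2)
  have hF_int : IntegrableOn F (Ioi 0) := by
    refine IntegrableOn.congr_fun ((integrableOn_exp_neg_mul_sq_add_div_sq one_pos
      (sq_nonneg c)).const_mul (rexp (2 * c))) (fun t (ht : 0 < t) => ?_) measurableSet_Ioi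
    rw [← exp_add]
    congr 1
    field_simp
    ring
  have hweighted_int := integrableOn_one_add_div_sq_smul_comp_sub_div
    (g := fun s => rexp (-s ^ 2)) (by simpa using integrable_exp_neg_mul_sq one_pos) hc
  have hJ_int : IntegrableOn (fun t => (c / t ^ 2) * F t) (Ioi 0) :=
    (hweighted_int.sub hF_int).congr_fun
      (fun t _ => by simp only [F, Pi.sub_apply, smul_eq_mul]; ring) measurableSet_Ioi
  -- `t ↦ c / t` swaps the two halves of the weight `1 + c / t ^ 2`
  have hJ : ∫ t in Ioi 0, (c / t ^ 2) * F t = ∫ t in Ioi 0, F t := by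
    rw [← integral_Ioi_comp_div_smul F hc]
    refine setIntegral_congr_fun measurableSet_Ioi fun t (ht : 0 < t) => ?_
    simp only [F, smul_eq_mul]
    congr 3
    field_simp
    ring
  have hsum : ∫ t in Ioi 0, (1 + c / t ^ 2) * F t = √π := by
    have := integral_Ioi_one_add_div_sq_smul_comp_sub_div (fun s => rexp (-s ^ 2)) hc
    exact this.trans (by simpa using integral_gaussian 1)
  simp only [add_mul, one_mul, integral_add hF_int hJ_int, hJ] at hsum
  linarith

theorem integral_exp_neg_mul_sq_add_div_sq {a b : ℝ} (ha : 0 < a) (hb : 0 < b) :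
    ∫ t in Ioi 0, rexp (-(a * t ^ 2 + b / t ^ 2)) = √(π / a) / 2 * rexp (-(2 * √(a * b))) := by
  set c := √(a * b)
  have hc : 0 < c := sqrt_pos.mpr (mul_pos ha hb)
  have hsa : 0 < √a := sqrt_pos.mpr ha
  -- substitute `t = s / √a`, then use `s ^ 2 + c ^ 2 / s ^ 2 = (s - c / s) ^ 2 + 2 c`
  have hscale := integral_comp_mul_left_Ioi
    (fun s => rexp (-(s - c / s) ^ 2) * rexp (-(2 * c))) 0 hsa
  rw [mul_zero] at hscale
  calc ∫ t in Ioi 0, rexp (-(a * t ^ 2 + b / t ^ 2))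
      = ∫ t in Ioi 0, rexp (-(√a * t - c / (√a * t)) ^ 2) * rexp (-(2 * c)) := by
        refine setIntegral_congr_fun measurableSet_Ioi fun t (ht : 0 < t) => ?_
        have hc2 : c ^ 2 = a * b := sq_sqrt (mul_pos ha hb).le
        have ha2 : √a ^ 2 = a := sq_sqrt ha.le
        rw [← exp_add]
        congr 1
        field_simp
        linear_combination (t ^ 4 * √a ^ 2 - b) * ha2 + hc2
    _ = (√a)⁻¹ * (√π / 2 * rexp (-(2 * c))) := by
        rw [hscale, smul_eq_mul, integral_mul_const, integral_exp_neg_sq_sub_div_sq hc]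
    _ = √(π / a) / 2 * rexp (-(2 * c)) := by
        rw [sqrt_div pi_nonneg]
        field_simp


noncomputable def heatKernel (α u : ℝ) : ℝ := 1 / √(2 * π * u) * rexp (-α ^ 2 / (2 * u))

theorem heatKernel_nonneg (α u : ℝ) : 0 ≤ heatKernel α u := by
  unfold heatKernel; positivity

theorem measurable_heatKernel (α : ℝ) : Measurable (heatKernel α) := by
  unfold heatKernel; fun_prop

theorem two_mul_smul_exp_neg_mul_heatKernel_sq (α x : ℝ) {t : ℝ} (ht : 0 < t) :
    (2 * t) • (rexp (-x * t ^ 2) * heatKernel α (t ^ 2)) =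
      √(2 / π) * rexp (-(x * t ^ 2 + α ^ 2 / 2 / t ^ 2)) := by
  have hsqrt : √(2 * π * t ^ 2) = √(2 * π) * t := by
    rw [sqrt_mul (by positivity), sqrt_sq ht.le]
  have hconst : √(2 / π) * √(2 * π) = 2 := by
    rw [← sqrt_mul (by positivity), show 2 / π * (2 * π) = 2 ^ 2 by field_simp,
      sqrt_sq two_pos.le]
  rw [heatKernel, smul_eq_mul, hsqrt, neg_add, exp_add]
  field_simp
  linear_combination -hconst

theorem integrableOn_exp_neg_mul_heatKernel (α : ℝ) {x : ℝ} (hx : 0 < x) :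
    IntegrableOn (fun u => rexp (-x * u) * heatKernel α u) (Ioi 0) := by
  rw [← integrableOn_Ioi_comp_sq_iff]
  exact IntegrableOn.congr_fun ((integrableOn_exp_neg_mul_sq_add_div_sq hx
    (by positivity : 0 ≤ α ^ 2 / 2)).const_mul √(2 / π))
    (fun t ht => (two_mul_smul_exp_neg_mul_heatKernel_sq α x ht).symm) measurableSet_Ioi

theorem integral_exp_neg_mul_heatKernel {α : ℝ} (hα : 0 < α) {x : ℝ} (hx : 0 < x) :
    ∫ u in Ioi 0, rexp (-x * u) * heatKernel α u = rexp (-α * √(2 * x)) / √(2 * x) := by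
  have hs2 : √(2 * x) ^ 2 = 2 * x := sq_sqrt (by positivity)
  have h1 : √(x * (α ^ 2 / 2)) = α * √(2 * x) / 2 := by
    rw [← sqrt_sq (by positivity : 0 ≤ α * √(2 * x) / 2)]
    congr 1
    linear_combination (-(α ^ 2) / 4) * hs2
  have h2 : √(2 / π) * √(π / x) = 2 / √(2 * x) := by
    rw [← sqrt_mul (by positivity), ← sqrt_sq (by positivity : 0 ≤ 2 / √(2 * x))]
    congr 1
    field_simp
    linear_combination hs2
  rw [← integral_Ioi_comp_sq,
    setIntegral_congr_fun measurableSet_Ioi fun t ht =>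
      two_mul_smul_exp_neg_mul_heatKernel_sq α x ht,
    integral_const_mul, integral_exp_neg_mul_sq_add_div_sq hx (by positivity), h1]
  calc √(2 / π) * (√(π / x) / 2 * rexp (-(2 * (α * √(2 * x) / 2))))
      = √(2 / π) * √(π / x) / 2 * rexp (-α * √(2 * x)) := by ring_nf
    _ = _ := by rw [h2]; ring

noncomputable def laplaceTransform (f : ℝ → ℝ) (z : ℂ) : ℂ :=
  ∫ u in Ioi (0 : ℝ), cexp (-z * u) * f u

theorem laplaceTransform_ofReal (f : ℝ → ℝ) (x : ℝ) :
    laplaceTransform f x = ↑(∫ u in Ioi 0, rexp (-x * u) * f u) := by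
  rw [laplaceTransform, ← integral_complex_ofReal]
  push_cast
  rfl

theorem laplaceTransform_eq_complexMGF {f : ℝ → ℝ} (hf_meas : Measurable f)
    (hf_nonneg : ∀ u ∈ Ioi (0 : ℝ), 0 ≤ f u) (z : ℂ) :
    laplaceTransform f z = complexMGF (fun u => -u)
      ((volume.restrict (Ioi (0 : ℝ))).withDensity fun u => (f u).toNNReal) z := by
  rw [complexMGF, integral_withDensity_eq_integral_smul hf_meas.real_toNNReal]
  refine setIntegral_congr_fun measurableSet_Ioi fun u hu => ?_
  rw [NNReal.smul_def, Real.coe_toNNReal _ (hf_nonneg u hu), Complex.real_smul]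
  push_cast
  ring_nf

theorem analyticOnNhd_laplaceTransform {f : ℝ → ℝ} (hf_meas : Measurable f)
    (hf_nonneg : ∀ u ∈ Ioi (0 : ℝ), 0 ≤ f u)
    (hf_int : ∀ x : ℝ, 0 < x → IntegrableOn (fun u => rexp (-x * u) * f u) (Ioi 0)) :
    AnalyticOnNhd ℂ (laplaceTransform f) {z | 0 < z.re} := by
  have hstrip : Ioi 0 ⊆ integrableExpSet (fun u => -u)
      ((volume.restrict (Ioi (0 : ℝ))).withDensity fun u => (f u).toNNReal) := fun t ht => by
    rw [integrableExpSet, mem_ofPred_eq, integrable_withDensity_iff_integrable_smul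
      hf_meas.real_toNNReal]
    refine (hf_int t ht).congr_fun (fun u hu => ?_) measurableSet_Ioi
    rw [NNReal.smul_def, Real.coe_toNNReal _ (hf_nonneg u hu), smul_eq_mul, mul_comm]
    ring_nf
  rw [funext (laplaceTransform_eq_complexMGF hf_meas hf_nonneg)]
  refine analyticOnNhd_complexMGF.mono fun z (hz : 0 < z.re) => ?_
  exact interior_mono hstrip (by rwa [isOpen_Ioi.interior_eq])

theorem AnalyticOnNhd.eqOn_of_preconnected_of_eventuallyEq_ofReal {E : Type*}
    [NormedAddCommGroup E] [NormedSpace ℂ E] [CompleteSpace E] {f g : ℂ → E} {U : Set ℂ}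
    (hf : AnalyticOnNhd ℂ f U) (hg : AnalyticOnNhd ℂ g U) (hU : IsPreconnected U) {x₀ : ℝ}
    (hx₀ : (x₀ : ℂ) ∈ U) (hfg : ∀ᶠ x : ℝ in 𝓝 x₀, f x = g x) : EqOn f g U := by
  refine hf.eqOn_of_preconnected_of_frequently_eq hg hU hx₀ ?_
  have hofReal : Tendsto ((↑) : ℝ → ℂ) (𝓝[≠] x₀) (𝓝[≠] (x₀ : ℂ)) :=
    tendsto_nhdsWithin_of_tendsto_nhds_of_eventually_within _
      (Complex.continuous_ofReal.tendsto x₀ |>.mono_left nhdsWithin_le_nhds)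
      (eventually_nhdsWithin_of_forall fun x hx => by simpa using hx)
  exact hofReal.frequently (hfg.filter_mono nhdsWithin_le_nhds).frequently

theorem ofReal_cpow_one_half {x : ℝ} (hx : 0 ≤ x) : (x : ℂ) ^ (1 / 2 : ℂ) = √x := by
  rw [sqrt_eq_rpow, Complex.ofReal_cpow hx]
  norm_num

theorem analyticOnNhd_cexp_neg_mul_sqrt_div_sqrt (a : ℂ) :
    AnalyticOnNhd ℂ (fun z : ℂ => cexp (-a * (2 * z) ^ (1 / 2 : ℂ)) / (2 * z) ^ (1 / 2 : ℂ))
      {z | 0 < z.re} := by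
  have hsqrt : DifferentiableOn ℂ (fun z : ℂ => (2 * z) ^ (1 / 2 : ℂ)) {z | 0 < z.re} :=
    fun z (hz : 0 < z.re) => ((differentiableAt_id.const_mul 2).cpow (differentiableAt_const _)
      (Or.inl (by simpa using hz))).differentiableWithinAt
  have hne : ∀ z ∈ {z : ℂ | 0 < z.re}, (2 * z) ^ (1 / 2 : ℂ) ≠ 0 := fun z (hz : 0 < z.re) => by
    rw [Ne, Complex.cpow_eq_zero_iff]
    rintro ⟨h, -⟩
    simp_all
  exact ((hsqrt.const_mul _).cexp.div hsqrt hne).analyticOnNhd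
    (isOpen_lt continuous_const Complex.continuous_re)

theorem laplace_heat_kernel (α : ℝ) (hα : 0 < α) (z : ℂ) (hz : 0 < z.re) :
    (∫ u in Set.Ioi (0 : ℝ),
        Complex.exp (-z * u) *
          (((1 / Real.sqrt (2 * Real.pi * u)) * Real.exp (-α ^ 2 / (2 * u)) : ℝ) : ℂ)) =
      Complex.exp (-(α : ℂ) * (2 * z) ^ (1 / 2 : ℂ)) / (2 * z) ^ (1 / 2 : ℂ) := by
  have hL : AnalyticOnNhd ℂ (laplaceTransform (heatKernel α)) {z | 0 < z.re} :=
    analyticOnNhd_laplaceTransform (measurable_heatKernel α) (fun u _ => heatKernel_nonneg α u)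
      fun _ hx => integrableOn_exp_neg_mul_heatKernel α hx
  show laplaceTransform (heatKernel α) z = _
  refine hL.eqOn_of_preconnected_of_eventuallyEq_ofReal
    (analyticOnNhd_cexp_neg_mul_sqrt_div_sqrt α) (convex_halfSpace_re_gt 0).isPreconnected
    (x₀ := 1) (by simp) ?_ hz
  filter_upwards [lt_mem_nhds one_pos] with x hx
  rw [laplaceTransform_ofReal, integral_exp_neg_mul_heatKernel hα hx,
    show (2 : ℂ) * x = ↑(2 * x) by push_cast; ring, ofReal_cpow_one_half (by positivity)]
  push_cast
  ring_nf
end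

section
/- For b > 0 and z a complex number with Re(z) > 0, the Laplace transform of the first passage density satisfies ∫₀^∞ exp(−z·w)·(b/√(2π))·w^{−3/2}·exp(−b²/(2w)) dw = exp(−b·√(2z)), with the principal branch of the square root. -/
/-!
Both sides are holomorphic in `z` on the right half-plane: the left one because it is the
complex moment generating function of `w ↦ -w` under the measure `μ_b(w) dw` on `(0, ∞)`,
which integrates `e^{-x w}` for every `x > 0`; the right one because `2 z` stays in the slit
plane. By the identity theorem it suffices to take `z = x > 0` real. There the substitution
`w = t⁻²` turns the Laplace transform into `(2b/√(2π)) ∫₀^∞ exp(-(b²/2)(t² + a²/t²)) dt` with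
`a = √(2x)/b`, and the Cauchy–Schlömilch substitution `u = t - a/t` reduces this to a Gaussian
integral.
-/

open MeasureTheory Real Set Filter Topology

lemma hasDerivAt_sub_const_div {𝕜 : Type*} [NontriviallyNormedField 𝕜] {a t : 𝕜}
    (ht : t ≠ 0) :
    HasDerivAt (fun t : 𝕜 => t - a / t) (1 + a / t ^ 2) t := by
  simpa only [div_eq_mul_inv, mul_neg, sub_neg_eq_add] using
    (hasDerivAt_id' t).fun_sub ((hasDerivAt_inv ht).const_mul a)

lemma hasDerivAt_const_div_id {𝕜 : Type*} [NontriviallyNormedField 𝕜] {a t : 𝕜}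
    (ht : t ≠ 0) :
    HasDerivAt (fun t : 𝕜 => a / t) (-(a / t ^ 2)) t := by
  simpa only [div_eq_mul_inv, mul_neg] using (hasDerivAt_inv ht).const_mul a

lemma strictMonoOn_sub_const_div {a : ℝ} (ha : 0 < a) :
    StrictMonoOn (fun t : ℝ => t - a / t) (Ioi 0) :=
  fun s hs t _ hst => by
    have : a / t < a / s := div_lt_div_of_pos_left ha hs hst
    simp only
    linarith

lemma image_sub_const_div_Ioi_zero {a : ℝ} (ha : 0 < a) :
    (fun t : ℝ => t - a / t) '' Ioi 0 = univ := by
  refine eq_univ_of_forall fun u => ?_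
  set d := √(u ^ 2 + 4 * a)
  have hd : d ^ 2 = u ^ 2 + 4 * a := sq_sqrt (by positivity)
  have hud : |u| < d := abs_lt_of_sq_lt_sq (by rw [hd]; linarith) (sqrt_nonneg _)
  have ht : 0 < (u + d) / 2 := by linarith [neg_abs_le u]
  -- `(u + d) / 2` is the positive root of `t ^ 2 - u * t - a`
  refine ⟨(u + d) / 2, ht, ?_⟩
  have : u + d ≠ 0 := by linarith
  simp only
  field_simp
  linear_combination hd

lemma image_const_div_Ioi_zero {a : ℝ} (ha : 0 < a) :
    (fun t : ℝ => a / t) '' Ioi 0 = Ioi 0 := by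
  refine Subset.antisymm (image_subset_iff.2 fun t ht => div_pos ha ht) fun u hu => ?_
  exact ⟨a / u, div_pos ha hu, div_div_cancel₀ ha.ne'⟩

theorem integral_Ioi_comp_sub_div_of_even {E : Type*} [NormedAddCommGroup E] [NormedSpace ℝ E]
    {g : ℝ → E} (hg : Integrable g) (hg_even : ∀ u, g (-u) = g u) {a : ℝ} (ha : 0 < a) :
    ∫ t in Ioi 0, g (t - a / t) = (2 : ℝ)⁻¹ • ∫ u, g u := by
  set h : ℝ → E := fun t => g (t - a / t)
  have hderiv : ∀ t ∈ Ioi (0 : ℝ),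
      HasDerivWithinAt (fun t => t - a / t) (1 + a / t ^ 2) (Ioi 0) t :=
    fun t ht => (hasDerivAt_sub_const_div (ne_of_gt ht)).hasDerivWithinAt
  have habs : ∀ t : ℝ, |1 + a / t ^ 2| = 1 + a / t ^ 2 := fun t => abs_of_pos (by positivity)
  have hinj := (strictMonoOn_sub_const_div ha).injOn
  have hint_g : IntegrableOn g ((fun t => t - a / t) '' Ioi 0) := by
    rwa [image_sub_const_div_Ioi_zero ha, integrableOn_univ]
  have hint : IntegrableOn (fun t => (1 + a / t ^ 2) • h t) (Ioi 0) := by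
    simpa only [habs] using
      (integrableOn_image_iff_integrableOn_abs_deriv_smul measurableSet_Ioi hderiv hinj g).1 hint_g
  have hsub : ∫ u, g u = ∫ t in Ioi 0, (1 + a / t ^ 2) • h t := by
    rw [← setIntegral_univ, ← image_sub_const_div_Ioi_zero ha,
      integral_image_eq_integral_abs_deriv_smul measurableSet_Ioi hderiv hinj]
    simp only [habs, h]
  -- the inversion `t ↦ a / t` preserves `h`, since `g` is even
  have hinv : ∫ t in Ioi 0, h t = ∫ t in Ioi 0, (a / t ^ 2) • h t := by
    have hderiv' : ∀ t ∈ Ioi (0 : ℝ),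
        HasDerivWithinAt (fun t => a / t) (-(a / t ^ 2)) (Ioi 0) t :=
      fun t ht => (hasDerivAt_const_div_id (ne_of_gt ht)).hasDerivWithinAt
    have hinj' : InjOn (fun t : ℝ => a / t) (Ioi 0) :=
      fun s _ t _ hst => by simpa [div_div_cancel₀ ha.ne'] using congrArg (a / ·) hst
    conv_lhs => rw [← image_const_div_Ioi_zero ha,
      integral_image_eq_integral_abs_deriv_smul measurableSet_Ioi hderiv' hinj']
    refine setIntegral_congr_fun measurableSet_Ioi fun t ht => ?_
    have : h (a / t) = h t := by
      simp only [h, div_div_cancel₀ ha.ne']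
      rw [← hg_even, neg_sub]
    rw [this, abs_neg, abs_of_pos (div_pos ha (pow_pos ht 2))]
  have hint_h : IntegrableOn h (Ioi 0) := by
    have : IntegrableOn (fun t => (1 + a / t ^ 2)⁻¹ • (1 + a / t ^ 2) • h t) (Ioi 0) :=
      hint.bdd_smul 1 (φ := fun t => (1 + a / t ^ 2)⁻¹)
        (by fun_prop : Measurable fun t : ℝ => (1 + a / t ^ 2)⁻¹).aestronglyMeasurable
        (ae_of_all _ fun t => by
          rw [norm_inv, norm_of_nonneg (by positivity)]
          exact inv_le_one_of_one_le₀ (le_add_of_nonneg_right (by positivity)))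
    refine this.congr_fun (fun t _ => ?_) measurableSet_Ioi
    simp [smul_smul, inv_mul_cancel₀ (by positivity : 1 + a / t ^ 2 ≠ 0)]
  have hint' : IntegrableOn (fun t => (a / t ^ 2) • h t) (Ioi 0) := by
    refine (hint.sub hint_h).congr_fun (fun t _ => ?_) measurableSet_Ioi
    simp [add_smul]
  rw [hsub]
  simp only [add_smul, one_smul]
  rw [integral_add hint_h hint', ← hinv, ← two_smul ℝ, smul_smul]
  norm_num

theorem integrable_exp_neg_mul_add_div_sq {p : ℝ} (hp : 0 < p) (a : ℝ) :
    Integrable fun t : ℝ => exp (-p * (t ^ 2 + a ^ 2 / t ^ 2)) := by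
  refine (integrable_exp_neg_mul_sq hp).mono' (by fun_prop : Measurable _).aestronglyMeasurable
    (ae_of_all _ fun t => ?_)
  rw [norm_of_nonneg (exp_pos _).le, exp_le_exp, neg_mul, neg_mul, neg_le_neg_iff]
  gcongr
  exact le_add_of_nonneg_right (by positivity)

theorem integral_Ioi_exp_neg_mul_add_div_sq {p a : ℝ} (hp : 0 < p) (ha : 0 < a) :
    ∫ t in Ioi 0, exp (-p * (t ^ 2 + a ^ 2 / t ^ 2)) = √(π / p) / 2 * exp (-2 * p * a) := by
  have hsq : ∀ t ∈ Ioi (0 : ℝ),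
      exp (-p * (t ^ 2 + a ^ 2 / t ^ 2)) = exp (-p * (t - a / t) ^ 2) * exp (-2 * p * a) := by
    intro t (ht : 0 < t)
    rw [← exp_add]
    congr 1
    field_simp
    ring
  have hglasser := integral_Ioi_comp_sub_div_of_even (g := fun u => exp (-p * u ^ 2))
    (integrable_exp_neg_mul_sq hp) (fun u => by simp) ha
  rw [setIntegral_congr_fun measurableSet_Ioi hsq, integral_mul_const, hglasser,
    integral_gaussian, smul_eq_mul]
  ring

open ProbabilityTheory in
theorem analyticOnNhd_integral_cexp_neg_mul {f : ℝ → ℝ} (hf_meas : Measurable f)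
    (hf_nonneg : ∀ w ∈ Ioi (0 : ℝ), 0 ≤ f w)
    (hf_int : ∀ x : ℝ, 0 < x → IntegrableOn (fun w => exp (-x * w) * f w) (Ioi 0)) :
    AnalyticOnNhd ℂ (fun z : ℂ => ∫ w in Ioi (0 : ℝ), Complex.exp (-z * w) * f w)
      {z | 0 < z.re} := by
  set μ := (volume.restrict (Ioi (0 : ℝ))).withDensity fun w => ENNReal.ofReal (f w)
  have hdens :
      ∀ᵐ w ∂(volume.restrict (Ioi (0 : ℝ))), (ENNReal.ofReal (f w)).toReal = f w := by
    filter_upwards [ae_restrict_mem measurableSet_Ioi] with w hw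
    exact ENNReal.toReal_ofReal (hf_nonneg w hw)
  have hlaplace : (fun z : ℂ => ∫ w in Ioi (0 : ℝ), Complex.exp (-z * w) * f w) =
      complexMGF (fun w => -w) μ := by
    ext z
    rw [complexMGF, integral_withDensity_eq_integral_toReal_smul (by fun_prop)
      (ae_of_all _ fun _ => ENNReal.ofReal_lt_top)]
    refine integral_congr_ae (hdens.mono fun w hw => ?_)
    simp [hw, mul_comm]
  have hIoi_subset : Ioi 0 ⊆ integrableExpSet (fun w => -w) μ := by
    intro x hx
    rw [integrableExpSet, mem_ofPred_eq, integrable_withDensity_iff_integrable_smul' (by fun_prop)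
      (ae_of_all _ fun _ => ENNReal.ofReal_lt_top)]
    refine (hf_int x hx).congr (hdens.mono fun w hw => ?_)
    simp [hw, mul_comm]
  rw [hlaplace]
  exact analyticOnNhd_complexMGF.mono fun z hz => interior_maximal hIoi_subset isOpen_Ioi hz

theorem AnalyticOnNhd.eqOn_re_pos_of_eq_ofReal {E : Type*} [NormedAddCommGroup E]
    [NormedSpace ℂ E] {f g : ℂ → E} (hf : AnalyticOnNhd ℂ f {z | 0 < z.re})
    (hg : AnalyticOnNhd ℂ g {z | 0 < z.re}) (hfg : ∀ x : ℝ, 0 < x → f x = g x) :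
    EqOn f g {z | 0 < z.re} := by
  refine hf.eqOn_of_preconnected_of_frequently_eq hg (convex_halfSpace_re_gt 0).isPreconnected
    (z₀ := 1) (by simp) ?_
  have hofReal : Tendsto ((↑) : ℝ → ℂ) (𝓝[≠] 1) (𝓝[≠] 1) := by
    simpa using Complex.continuous_ofReal.continuousWithinAt.tendsto_nhdsWithin
      (x := (1 : ℝ)) (t := {1}ᶜ) fun x hx => by simpa using hx
  have hreal : ∀ᶠ x : ℝ in 𝓝[≠] 1, f x = g x :=
    eventually_nhdsWithin_of_eventually_nhds ((lt_mem_nhds one_pos).mono hfg)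
  exact hofReal.frequently hreal.frequently

theorem analyticOnNhd_cexp_neg_mul_cpow_half (b : ℂ) :
    AnalyticOnNhd ℂ (fun z : ℂ => Complex.exp (-b * (2 * z) ^ (1 / 2 : ℂ)))
      {z | 0 < z.re} := by
  refine DifferentiableOn.analyticOnNhd (fun z (hz : 0 < z.re) => ?_)
    (isOpen_lt continuous_const Complex.continuous_re)
  have h2z : 2 * z ∈ Complex.slitPlane := Complex.mem_slitPlane_iff.2 (Or.inl (by simpa using hz))
  exact (((differentiableAt_id.const_mul 2).cpow_const h2z).const_mul (-b)).cexp
    |>.differentiableWithinAt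

noncomputable def firstPassageDensity (b w : ℝ) : ℝ :=
  b / √(2 * π) * w ^ (-(3 : ℝ) / 2) * exp (-b ^ 2 / (2 * w))

lemma firstPassageDensity_nonneg {b w : ℝ} (hb : 0 ≤ b) (hw : 0 < w) :
    0 ≤ firstPassageDensity b w := by
  unfold firstPassageDensity
  positivity

lemma measurable_firstPassageDensity (b : ℝ) : Measurable (firstPassageDensity b) := by
  unfold firstPassageDensity
  fun_prop

-- the integrand produced by `integral_comp_rpow_Ioi` for the substitution `w = t ^ (-2)`
lemma exp_neg_mul_firstPassageDensity_rpow_neg_two {b x t : ℝ} (hb : 0 < b) (hx : 0 ≤ x)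
    (ht : 0 < t) :
    (|(-2 : ℝ)| * t ^ ((-2 : ℝ) - 1)) •
        (exp (-x * t ^ (-2 : ℝ)) * firstPassageDensity b (t ^ (-2 : ℝ))) =
      2 * b / √(2 * π) * exp (-(b ^ 2 / 2) * (t ^ 2 + (√(2 * x) / b) ^ 2 / t ^ 2)) := by
  have h2 : t ^ (-2 : ℝ) = (t ^ 2)⁻¹ := by rw [rpow_neg ht.le, rpow_two]
  have h3 : t ^ ((-2 : ℝ) - 1) = (t ^ 3)⁻¹ := by
    rw [show (-2 : ℝ) - 1 = -(3 : ℕ) by norm_num, rpow_neg ht.le, rpow_natCast]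
  have h32 : (t ^ (-2 : ℝ)) ^ (-(3 : ℝ) / 2) = t ^ 3 := by
    rw [← rpow_mul ht.le, show (-2 : ℝ) * (-(3 : ℝ) / 2) = (3 : ℕ) by norm_num,
      rpow_natCast]
  have hsqrt : √(2 * x) ^ 2 = 2 * x := sq_sqrt (by positivity)
  have hexp : exp (-x * (t ^ 2)⁻¹) * exp (-b ^ 2 / (2 * (t ^ 2)⁻¹)) =
      exp (-(b ^ 2 / 2) * (t ^ 2 + 2 * x / b ^ 2 / t ^ 2)) := by
    rw [← exp_add]
    congr 1
    field_simp
    ring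
  rw [firstPassageDensity, h32, h3, h2, smul_eq_mul, div_pow, hsqrt, ← hexp, abs_neg, abs_two]
  field_simp

theorem integrableOn_exp_neg_mul_firstPassageDensity {b x : ℝ} (hb : 0 < b) (hx : 0 ≤ x) :
    IntegrableOn (fun w => exp (-x * w) * firstPassageDensity b w) (Ioi 0) := by
  rw [← integrableOn_Ioi_comp_rpow_iff _ (by norm_num : (-2 : ℝ) ≠ 0)]
  refine (((integrable_exp_neg_mul_add_div_sq (by positivity : 0 < b ^ 2 / 2) _).const_mul
    (2 * b / √(2 * π))).integrableOn).congr_fun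
    (fun t ht => (exp_neg_mul_firstPassageDensity_rpow_neg_two hb hx ht).symm) measurableSet_Ioi

theorem integral_exp_neg_mul_firstPassageDensity {b x : ℝ} (hb : 0 < b) (hx : 0 < x) :
    ∫ w in Ioi 0, exp (-x * w) * firstPassageDensity b w = exp (-b * √(2 * x)) := by
  rw [← integral_comp_rpow_Ioi _ (by norm_num : (-2 : ℝ) ≠ 0),
    setIntegral_congr_fun measurableSet_Ioi
      (fun t ht => exp_neg_mul_firstPassageDensity_rpow_neg_two hb hx.le ht),
    integral_const_mul, integral_Ioi_exp_neg_mul_add_div_sq (by positivity) (by positivity),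
    show π / (b ^ 2 / 2) = 2 * π / b ^ 2 by ring, sqrt_div' _ (sq_nonneg b), sqrt_sq hb.le]
  field_simp

theorem first_passage_laplace (b : ℝ) (hb : 0 < b) (z : ℂ) (hz : 0 < z.re) :
    (∫ w in Set.Ioi (0 : ℝ),
        Complex.exp (-z * w) *
          (((b / Real.sqrt (2 * Real.pi)) * w ^ (-(3 : ℝ) / 2) * Real.exp (-b ^ 2 / (2 * w)) : ℝ) : ℂ)) =
      Complex.exp (-(b : ℂ) * (2 * z) ^ (1 / 2 : ℂ)) := by
  change ∫ w in Ioi (0 : ℝ), Complex.exp (-z * w) * firstPassageDensity b w = _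
  have hL := analyticOnNhd_integral_cexp_neg_mul (measurable_firstPassageDensity b)
    (fun w hw => firstPassageDensity_nonneg hb.le hw)
    (fun x hx => integrableOn_exp_neg_mul_firstPassageDensity hb hx.le)
  refine hL.eqOn_re_pos_of_eq_ofReal (analyticOnNhd_cexp_neg_mul_cpow_half b) (fun x hx => ?_) hz
  have hsqrt : (2 * (x : ℂ)) ^ (1 / 2 : ℂ) = (√(2 * x) : ℝ) := by
    rw [sqrt_eq_rpow, Complex.ofReal_cpow (by positivity)]
    push_cast
    rfl
  calc ∫ w in Ioi (0 : ℝ), Complex.exp (-(x : ℂ) * w) * firstPassageDensity b w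
      = ((∫ w in Ioi (0 : ℝ), exp (-x * w) * firstPassageDensity b w : ℝ) : ℂ) := by
        rw [← integral_complex_ofReal]
        push_cast
        rfl
    _ = Complex.exp (-b * (2 * x) ^ (1 / 2 : ℂ)) := by
        rw [integral_exp_neg_mul_firstPassageDensity hb hx, hsqrt]
        push_cast
        rfl
end
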